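/- arXiv:1808.09378 — 2 statements merged into one kernel-verified Lean document; each statement's English description precedes it below -/
import Mathlib

section
/- Let π be a partition of [s,t] with m ≥ 2 subintervals and let ω be a control function. Then there exists an interior point u of π, with adjacent partition points u− < u < u', such that ω(u−, u') ≤ (2/(m−1)) · ω(s,t). -/
/-- A control function on the simplex `{0 ≤ s ≤ t ≤ T}`. -/
def IsControl (T : ℝ) (ω : ℝ → ℝ → ℝ) : Prop :=
  ContinuousOn (fun p : ℝ × ℝ => ω p.1 p.2) {p : ℝ × ℝ | 0 ≤ p.1 ∧ p.1 ≤ p.2 ∧ p.2 ≤ T}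
    ∧ (∀ s t, 0 ≤ s → s ≤ t → t ≤ T → 0 ≤ ω s t)
    ∧ (∀ s, 0 ≤ s → s ≤ T → ω s s = 0)
    ∧ (∀ s1 t1 s2 t2, 0 ≤ s2 → s2 ≤ s1 → s1 ≤ t1 → t1 ≤ t2 → t2 ≤ T → ω s1 t1 ≤ ω s2 t2)
    ∧ (∀ s u t, 0 ≤ s → s ≤ u → u ≤ t → t ≤ T → ω s u + ω u t ≤ ω s t)

/-!
Summing `ω(u_{i-1}, u_{i+1})` over all `m - 1` interior points, every subinterval
`[u_j, u_{j+1}]` is covered at most twice: the windows centred at odd points are disjoint,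
and so are those centred at even points. By superadditivity the whole sum is therefore at
most `2 ω(s,t)`, and the smallest of its `m - 1` terms is at most the average.
-/

open Finset

namespace IsControl

variable {T : ℝ} {ω : ℝ → ℝ → ℝ}

lemma nonneg (hω : IsControl T ω) {s t : ℝ} (hs : 0 ≤ s) (hst : s ≤ t) (ht : t ≤ T) :
    0 ≤ ω s t :=
  hω.2.1 s t hs hst ht

lemma mono (hω : IsControl T ω) {s₁ t₁ s₂ t₂ : ℝ} (hs₂ : 0 ≤ s₂) (hs : s₂ ≤ s₁)
    (hst : s₁ ≤ t₁) (ht : t₁ ≤ t₂) (hT : t₂ ≤ T) : ω s₁ t₁ ≤ ω s₂ t₂ :=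
  hω.2.2.2.1 s₁ t₁ s₂ t₂ hs₂ hs hst ht hT

lemma add_le (hω : IsControl T ω) {s u t : ℝ} (hs : 0 ≤ s) (hsu : s ≤ u) (hut : u ≤ t)
    (ht : t ≤ T) : ω s u + ω u t ≤ ω s t :=
  hω.2.2.2.2 s u t hs hsu hut ht

/-- The windows `[p i, p (i + 2)]` with `i < n` fit into the two chains `[p 0, p n]` and
`[p 0, p (n + 1)]`: the next window `[p n, p (n + 2)]` extends the first chain, which then
becomes the longer one. -/
lemma sum_two_step_le (hω : IsControl T ω) {p : ℕ → ℝ} (hp₀ : 0 ≤ p 0) :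
    ∀ n : ℕ, MonotoneOn p (Set.Iic (n + 1)) → p (n + 1) ≤ T →
      ∑ i ∈ range n, ω (p i) (p (i + 2)) ≤ ω (p 0) (p n) + ω (p 0) (p (n + 1))
  | 0, hp, hT => by
    have h₁ : p 0 ≤ p 1 := hp (by simp) (by simp) zero_le_one
    simpa using add_nonneg (hω.nonneg hp₀ le_rfl (h₁.trans hT)) (hω.nonneg hp₀ h₁ hT)
  | n + 1, hp, hT => by
    have hle : ∀ {i j : ℕ}, i ≤ j → j ≤ n + 2 → p i ≤ p j := fun hij hj =>
      hp (Set.mem_Iic.2 (hij.trans hj)) (Set.mem_Iic.2 hj) hij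
    have ih := sum_two_step_le hω hp₀ n (hp.mono (Set.Iic_subset_Iic.2 (by omega)))
      ((hle (by omega) le_rfl).trans hT)
    have hsplit := hω.add_le hp₀ (hle (Nat.zero_le n) (by omega)) (hle (by omega) le_rfl) hT
    rw [sum_range_succ]
    linarith

end IsControl

/-- Given a partition `s = pts 0 < ... < pts m = t` with `m ≥ 2` subintervals and a
control function `ω`, there exists an interior point `pts i` whose adjacent points
satisfy `ω(pts (i-1), pts (i+1)) ≤ 2/(m-1) · ω(s,t)`. -/
theorem exists_small_interior_point (T : ℝ) (ω : ℝ → ℝ → ℝ) (hω : IsControl T ω)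
    (s t : ℝ) (hs : 0 ≤ s) (ht : t ≤ T) (m : ℕ) (hm : 2 ≤ m) (pts : ℕ → ℝ)
    (hfirst : pts 0 = s) (hlast : pts m = t)
    (hstrict : ∀ i, i < m → pts i < pts (i + 1)) :
    ∃ i, 1 ≤ i ∧ i < m ∧
      ω (pts (i - 1)) (pts (i + 1)) ≤ 2 / ((m : ℝ) - 1) * ω s t := by
  obtain ⟨n, rfl⟩ : ∃ n, m = n + 1 := ⟨m - 1, by omega⟩
  subst hfirst hlast
  have hmono : MonotoneOn pts (Set.Iic (n + 1)) :=
    (strictMonoOn_Iic_of_lt_succ hstrict).monotoneOn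
  have hsum : ∑ i ∈ range n, ω (pts i) (pts (i + 2)) ≤ 2 * ω (pts 0) (pts (n + 1)) := by
    have hshorter := hω.mono hs le_rfl (hmono (by simp) (by simp) (Nat.zero_le n))
      (hmono (by simp) (by simp) n.le_succ) ht
    linarith [hω.sum_two_step_le hs n hmono ht]
  have hconst : ∑ _i ∈ range n, 2 / (((n + 1 : ℕ) : ℝ) - 1) * ω (pts 0) (pts (n + 1))
      = 2 * ω (pts 0) (pts (n + 1)) := by
    have hn : (n : ℝ) ≠ 0 := by norm_cast; omega
    simp only [sum_const, card_range, nsmul_eq_mul]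
    push_cast
    rw [add_sub_cancel_right]
    field_simp
  obtain ⟨i, hi, hle⟩ :=
    exists_le_of_sum_le (nonempty_range_iff.2 (by omega)) (hsum.trans_eq hconst.symm)
  exact ⟨i + 1, by omega, by simpa using hi, hle⟩
end

section
/- Let X: [0,T] → B be continuous of finite p-variation and H: [0,T] → Hom(B,V) continuous of finite q-variation with 1/p + 1/q > 1. Then the Riemann sums with adapted evaluation Σ_{u∈π} H_u X_{u,u'} and with terminal evaluation Σ_{u∈π} H_{u'} X_{u,u'} converge to the same limit as the partition meshsize |π| → 0; that is, Σ_{u∈π} |H_u X_{u,u'} − H_{u'} X_{u,u'}| → 0 as |π| → 0. -/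
/-- A partition of `[s,t]`: points `pts 0 = s < pts 1 < ... < pts n = t`. -/
structure RealPartition (s t : ℝ) where
  n : ℕ
  npos : 0 < n
  pts : ℕ → ℝ
  first : pts 0 = s
  last : pts n = t
  strict : ∀ i, i < n → pts i < pts (i + 1)

/-- The meshsize of a partition. -/
noncomputable def RealPartition.mesh {s t : ℝ} (π : RealPartition s t) : ℝ :=
  (Finset.range π.n).sup'
    (Finset.nonempty_range_iff.mpr π.npos.ne')
    fun i => π.pts (i + 1) - π.pts i

namespace Real

lemma rpow_mul_rpow_le_rpow_add {a b c α β : ℝ} (ha : 0 ≤ a) (hb : 0 ≤ b) (hac : a ≤ c)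
    (hbc : b ≤ c) (hα : 0 ≤ α) (hβ : 0 ≤ β) : a ^ α * b ^ β ≤ c ^ (α + β) := by
  have hc := ha.trans hac
  rw [rpow_add_of_nonneg hc hα hβ]
  gcongr

lemma rpow_le_rpow_sub_one_mul {c η θ : ℝ} (hc : 0 ≤ c) (hcη : c ≤ η) (hθ : 1 ≤ θ) :
    c ^ θ ≤ η ^ (θ - 1) * c := by
  calc c ^ θ = c ^ (θ - 1) * c := by
        rw [← rpow_add_one' hc (by linarith), sub_add_cancel]
    _ ≤ η ^ (θ - 1) * c := by gcongr

end Real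

namespace RealPartition

variable {s t : ℝ} (π : RealPartition s t)

lemma pts_le_pts {i j : ℕ} (hij : i ≤ j) (hj : j ≤ π.n) : π.pts i ≤ π.pts j := by
  induction j, hij using Nat.le_induction with
  | base => exact le_rfl
  | succ m _ ih => exact (ih (by omega)).trans (π.strict m (by omega)).le

lemma pts_mem_Icc {i : ℕ} (hi : i ≤ π.n) : π.pts i ∈ Set.Icc s t :=
  ⟨by simpa only [π.first] using π.pts_le_pts (Nat.zero_le i) hi,
    by simpa only [π.last] using π.pts_le_pts hi le_rfl⟩

lemma pts_succ_sub_le_mesh {i : ℕ} (hi : i < π.n) : π.pts (i + 1) - π.pts i ≤ π.mesh :=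
  Finset.le_sup' (fun j => π.pts (j + 1) - π.pts j) (Finset.mem_range.mpr hi)

end RealPartition

namespace IsControl

variable {T : ℝ} {ω : ℝ → ℝ → ℝ}

lemma add {ω' : ℝ → ℝ → ℝ} (h : IsControl T ω) (h' : IsControl T ω') :
    IsControl T (fun s t => ω s t + ω' s t) := by
  obtain ⟨hc, hnn, hdiag, hmono, hsup⟩ := h
  obtain ⟨hc', hnn', hdiag', hmono', hsup'⟩ := h'
  refine ⟨hc.add hc', fun s t h₁ h₂ h₃ => add_nonneg (hnn s t h₁ h₂ h₃) (hnn' s t h₁ h₂ h₃),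
    fun s h₁ h₂ => by simp only [hdiag s h₁ h₂, hdiag' s h₁ h₂, add_zero],
    fun s₁ t₁ s₂ t₂ h₁ h₂ h₃ h₄ h₅ =>
      add_le_add (hmono s₁ t₁ s₂ t₂ h₁ h₂ h₃ h₄ h₅) (hmono' s₁ t₁ s₂ t₂ h₁ h₂ h₃ h₄ h₅),
    fun s u t h₁ h₂ h₃ h₄ => ?_⟩
  linarith [hsup s u t h₁ h₂ h₃ h₄, hsup' s u t h₁ h₂ h₃ h₄]

lemma sum_le (h : IsControl T ω) {a b : ℝ} (ha : 0 ≤ a) (hb : b ≤ T) (π : RealPartition a b) :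
    ∑ i ∈ Finset.range π.n, ω (π.pts i) (π.pts (i + 1)) ≤ ω a b := by
  obtain ⟨-, -, hdiag, -, hsup⟩ := h
  have hpts {i : ℕ} (hi : i ≤ π.n) : 0 ≤ π.pts i ∧ π.pts i ≤ T :=
    ⟨ha.trans (π.pts_mem_Icc hi).1, (π.pts_mem_Icc hi).2.trans hb⟩
  suffices ∀ m ≤ π.n, ∑ i ∈ Finset.range m, ω (π.pts i) (π.pts (i + 1)) ≤ ω a (π.pts m) by
    simpa only [π.last] using this π.n le_rfl
  intro m hm
  induction m with
  | zero => simp [π.first, hdiag a ha (π.first ▸ (hpts (Nat.zero_le _)).2)]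
  | succ m ih =>
    rw [Finset.sum_range_succ]
    calc _ ≤ ω a (π.pts m) + ω (π.pts m) (π.pts (m + 1)) := by gcongr; exact ih (by omega)
      _ ≤ ω a (π.pts (m + 1)) :=
        hsup _ _ _ ha (π.pts_mem_Icc (by omega)).1 (π.strict m (by omega)).le (hpts hm).2

lemma exists_pos_lt_of_sub_lt (h : IsControl T ω) {η : ℝ} (hη : 0 < η) :
    ∃ δ > 0, ∀ s t, 0 ≤ s → s ≤ t → t ≤ T → t - s < δ → ω s t < η := by
  have hK : IsCompact {p : ℝ × ℝ | 0 ≤ p.1 ∧ p.1 ≤ p.2 ∧ p.2 ≤ T} := by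
    have hbox : IsCompact (Set.Icc (0 : ℝ) T ×ˢ Set.Icc (0 : ℝ) T) :=
      isCompact_Icc.prod isCompact_Icc
    refine hbox.of_isClosed_subset ?_ ?_
    · exact (isClosed_le continuous_const continuous_fst).inter
        ((isClosed_le continuous_fst continuous_snd).inter
          (isClosed_le continuous_snd continuous_const))
    · rintro ⟨a, b⟩ ⟨h₁, h₂, h₃⟩
      exact ⟨⟨h₁, h₂.trans h₃⟩, ⟨h₁.trans h₂, h₃⟩⟩
  obtain ⟨δ, hδ, hω⟩ :=
    Metric.uniformContinuousOn_iff.mp (hK.uniformContinuousOn_of_continuous h.1) η hη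
  refine ⟨δ, hδ, fun s t hs hst ht hδst => ?_⟩
  have hdist : dist (s, t) (s, s) < δ := by
    simpa [Prod.dist_eq, Real.dist_eq, abs_of_nonneg (sub_nonneg.2 hst), hδ] using hδst
  simpa [h.2.2.1 s hs (hst.trans ht), Real.dist_eq, abs_of_nonneg (h.2.1 s t hs hst ht)] using
    hω (s, t) ⟨hs, hst, ht⟩ (s, s) ⟨hs, le_rfl, hst.trans ht⟩ hdist

lemma exists_pos_sum_rpow_lt (h : IsControl T ω) (hT : 0 ≤ T) {θ : ℝ} (hθ : 1 < θ) {ε : ℝ}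
    (hε : 0 < ε) : ∃ δ > 0, ∀ π : RealPartition 0 T, π.mesh < δ →
      ∑ i ∈ Finset.range π.n, ω (π.pts i) (π.pts (i + 1)) ^ θ < ε := by
  have hM : 0 < ω 0 T + 1 := by linarith [h.2.1 0 T le_rfl hT le_rfl]
  obtain ⟨η, hη, hηε⟩ : ∃ η > 0, η ^ (θ - 1) * (ω 0 T + 1) = ε :=
    ⟨(ε / (ω 0 T + 1)) ^ (θ - 1)⁻¹, by positivity, by
      rw [Real.rpow_inv_rpow (by positivity) (by linarith)]; field_simp⟩
  obtain ⟨δ, hδ, hsmall⟩ := h.exists_pos_lt_of_sub_lt hη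
  refine ⟨δ, hδ, fun π hπ => ?_⟩
  have hterm (i : ℕ) (hi : i ∈ Finset.range π.n) :
      ω (π.pts i) (π.pts (i + 1)) ^ θ ≤ η ^ (θ - 1) * ω (π.pts i) (π.pts (i + 1)) := by
    rw [Finset.mem_range] at hi
    have hs := (π.pts_mem_Icc hi.le).1
    have hst := (π.strict i hi).le
    have ht := (π.pts_mem_Icc hi).2
    exact Real.rpow_le_rpow_sub_one_mul (h.2.1 _ _ hs hst ht)
      (hsmall _ _ hs hst ht ((π.pts_succ_sub_le_mesh hi).trans_lt hπ)).le hθ.le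
  calc _ ≤ ∑ i ∈ Finset.range π.n, η ^ (θ - 1) * ω (π.pts i) (π.pts (i + 1)) :=
        Finset.sum_le_sum hterm
    _ = η ^ (θ - 1) * ∑ i ∈ Finset.range π.n, ω (π.pts i) (π.pts (i + 1)) :=
        (Finset.mul_sum ..).symm
    _ ≤ η ^ (θ - 1) * ω 0 T := by gcongr; exact h.sum_le le_rfl le_rfl π
    _ < ε := by rw [← hηε]; gcongr; linarith

end IsControl

theorem adapted_eq_terminal_evaluation_general {B V : Type*}
    [NormedAddCommGroup B] [NormedSpace ℝ B] [NormedAddCommGroup V] [NormedSpace ℝ V]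
    (T p q : ℝ) (hT : 0 < T) (hp : 1 ≤ p) (hq : 1 ≤ q) (hpq : 1 / p + 1 / q > 1)
    (X : ℝ → B) (H : ℝ → B →L[ℝ] V) (ωX ωH : ℝ → ℝ → ℝ)
    (hωX : IsControl T ωX) (hωH : IsControl T ωH)
    (hXvar : ∀ s t, 0 ≤ s → s ≤ t → t ≤ T → ‖X t - X s‖ ≤ ωX s t ^ (1 / p))
    (hHvar : ∀ s t, 0 ≤ s → s ≤ t → t ≤ T → ‖H t - H s‖ ≤ ωH s t ^ (1 / q)) :
    ∀ ε > 0, ∃ δ > 0, ∀ π : RealPartition 0 T, π.mesh < δ →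
      (∑ i ∈ Finset.range π.n,
          ‖(H (π.pts i) - H (π.pts (i + 1))) (X (π.pts (i + 1)) - X (π.pts i))‖) < ε := by
  intro ε hε
  have hterm (s t : ℝ) (hs : 0 ≤ s) (hst : s ≤ t) (ht : t ≤ T) :
      ‖(H s - H t) (X t - X s)‖ ≤ (ωX s t + ωH s t) ^ (1 / p + 1 / q) := by
    have hX := hωX.2.1 s t hs hst ht
    have hH := hωH.2.1 s t hs hst ht
    calc ‖(H s - H t) (X t - X s)‖ ≤ ‖H t - H s‖ * ‖X t - X s‖ := by
          simpa only [norm_sub_rev (H s)] using (H s - H t).le_opNorm (X t - X s)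
      _ ≤ ωX s t ^ (1 / p) * ωH s t ^ (1 / q) := by
          rw [mul_comm]; gcongr; exacts [hXvar s t hs hst ht, hHvar s t hs hst ht]
      _ ≤ (ωX s t + ωH s t) ^ (1 / p + 1 / q) :=
          Real.rpow_mul_rpow_le_rpow_add hX hH (by linarith) (by linarith) (by positivity)
            (by positivity)
  obtain ⟨δ, hδ, hsum⟩ := (hωX.add hωH).exists_pos_sum_rpow_lt hT.le hpq hε
  refine ⟨δ, hδ, fun π hπ => (Finset.sum_le_sum fun i hi => ?_).trans_lt (hsum π hπ)⟩
  rw [Finset.mem_range] at hi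
  exact hterm _ _ (π.pts_mem_Icc hi.le).1 (π.strict i hi).le (π.pts_mem_Icc hi).2

/-- For `X` continuous of finite `p`-variation and `H` continuous of finite
`q`-variation, `1/p + 1/q > 1`, Riemann sums with adapted and with terminal evaluation
converge to the same limit: `Σ_{u∈π} ‖H_u X_{u,u'} − H_{u'} X_{u,u'}‖ → 0` as
`|π| → 0`. -/
theorem adapted_eq_terminal_evaluation {B V : Type*}
    [NormedAddCommGroup B] [NormedSpace ℝ B] [NormedAddCommGroup V] [NormedSpace ℝ V]
    (T p q : ℝ) (hT : 0 < T) (hp : 1 ≤ p) (hq : 1 ≤ q) (hpq : 1 / p + 1 / q > 1)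
    (X : ℝ → B) (H : ℝ → B →L[ℝ] V) (ωX ωH : ℝ → ℝ → ℝ)
    (hωX : IsControl T ωX) (hωH : IsControl T ωH)
    (hXc : ContinuousOn X (Set.Icc 0 T)) (hHc : ContinuousOn H (Set.Icc 0 T))
    (hXvar : ∀ s t, 0 ≤ s → s ≤ t → t ≤ T → ‖X t - X s‖ ≤ ωX s t ^ (1 / p))
    (hHvar : ∀ s t, 0 ≤ s → s ≤ t → t ≤ T → ‖H t - H s‖ ≤ ωH s t ^ (1 / q)) :
    ∀ ε > 0, ∃ δ > 0, ∀ π : RealPartition 0 T, π.mesh < δ →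
      (∑ i ∈ Finset.range π.n,
          ‖(H (π.pts i) - H (π.pts (i + 1))) (X (π.pts (i + 1)) - X (π.pts i))‖) < ε :=
  adapted_eq_terminal_evaluation_general T p q hT hp hq hpq X H ωX ωH hωX hωH hXvar hHvar
end
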